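/- arXiv:math-ph/0101013 — 4 statements merged into one kernel-verified Lean document; each statement's English description precedes it below -/
import Mathlib

section
/- Let 0 < q < 1, let A(ω) = a₁ω + a₀, B(ω) = b₂ω² + b₁ω + b₀ be real polynomials, let a ≤ 0 ≤ b, and let ϱ : ℝ → ℝ be continuous at 0, satisfy the q-Pearson equation and the boundary conditions ϱ(a)B(a) = ϱ(b)B(b) = 0, and assume the linear functional p ↦ ∫_a^b p(ω)ϱ(ω) d_qω is positive definite on real polynomials (so a monic orthogonal polynomial system exists and is unique). Let (P̃_n)_{n≥0} be the monic orthogonal polynomial system for ϱ(ω)d_qω on [a,b]. Then each P̃_n satisfies the Hahn q-difference equation A(ω)·(∂_q P̃_n)(ω) + B(ω)·(∂_q(Q^{−1}(∂_q P̃_n)))(ω) = λ_n·P̃_n(ω) for all ω ≠ 0, where (Q^{−1}g)(ω) := g(q^{−1}ω) and λ_n = a₁[n] + b₂[n][n−1]q^{−(n−1)}, with [m] = (1−q^m)/(1−q). -/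
/-!
The Pearson equation puts the Hahn operator `L s = A ∂_q s + B ∂_q(Q⁻¹ ∂_q s)` in Sturm–Liouville
form `ϱ · L s = ∂_q (ϱ B · Q⁻¹ ∂_q s)`. By the q-product rule, `ϱ (L p · r - p · L r)` is then the
q-derivative of a function that is continuous at `0` and vanishes at `a` and `b`; the Jackson
integral of a q-derivative telescopes, so `L` is symmetric for the moment functional. As `L` does
not raise degrees and the `ωⁿ`-coefficient of `L p` is `λ_n` times that of `p` when `deg p ≤ n`,
`L P̃_n - λ_n P̃_n` has degree `< n`; by symmetry it is orthogonal to every polynomial of degree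
`< n`, in particular to itself, hence zero.
-/

/-- The q-derivative of a function: `(∂_q f)(ω) = (f(ω) − f(qω))/((1−q)ω)` (junk at `ω = 0`). -/
noncomputable def qD (q : ℝ) (f : ℝ → ℝ) (ω : ℝ) : ℝ :=
  (f ω - f (q * ω)) / ((1 - q) * ω)

/-- The q-derivative of a real polynomial: `a·Xⁿ ↦ a·[n]·Xⁿ⁻¹` where `[n] = 1 + q + ⋯ + qⁿ⁻¹`,
so that for `ω ≠ 0` its value at `ω` is `(p(ω) − p(qω))/((1−q)ω)`. -/
noncomputable def qDerivP (q : ℝ) (p : Polynomial ℝ) : Polynomial ℝ :=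
  p.sum fun n a => Polynomial.C (a * ∑ i ∈ Finset.range n, q ^ i) * Polynomial.X ^ (n - 1)

/-- The Jackson integral `∫_a^b f(ω) d_qω = (1−q)·∑_{k=0}^∞ qᵏ(b·f(qᵏb) − a·f(qᵏa))`. -/
noncomputable def jackson (q a b : ℝ) (f : ℝ → ℝ) : ℝ :=
  (1 - q) * ∑' k : ℕ, q ^ k * (b * f (q ^ k * b) - a * f (q ^ k * a))

/-- Absolute convergence of the Jackson integral of `f` on `[a,b]`. -/
def JacksonSummable (q a b : ℝ) (f : ℝ → ℝ) : Prop :=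
  Summable fun k : ℕ => |q ^ k * (b * f (q ^ k * b) - a * f (q ^ k * a))|

open Polynomial Filter Topology

section OrthogonalPolynomials

variable {R : Type*} [CommRing R] {P : ℕ → R[X]}

theorem map_eq_zero_of_degree_lt (hmonic : ∀ n, (P n).Monic) (hdeg : ∀ n, (P n).natDegree = n)
    {ψ : R[X] →ₗ[R] R} {n : ℕ} (hψ : ∀ m < n, ψ (P m) = 0) {r : R[X]} (hr : r.degree < n) :
    ψ r = 0 := by
  induction n generalizing r with
  | zero =>
    have : r = 0 := by
      ext k
      exact (degree_lt_iff_coeff_zero r 0).1 hr k k.zero_le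
    rw [this, map_zero]
  | succ n ih =>
    have hPn : (P n).coeff n = 1 := by simpa [hdeg n] using (hmonic n).coeff_natDegree
    set r' := r - C (r.coeff n) * P n
    have hr' : r'.degree < n := by
      refine (degree_lt_iff_coeff_zero _ _).2 fun k hk => ?_
      rcases hk.eq_or_lt with rfl | hk
      · simp [r', hPn]
      · have hPk : (P n).coeff k = 0 := coeff_eq_zero_of_natDegree_lt (by rwa [hdeg])
        simp [r', hPk, (degree_lt_iff_coeff_zero r _).1 hr k hk]
    have hsplit : r = r' + r.coeff n • P n := by simp [r', C_mul']
    rw [hsplit, map_add, map_smul, ih (fun m hm => hψ m (by omega)) hr', hψ n n.lt_succ_self,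
      smul_zero, add_zero]

variable {φ : R[X] →ₗ[R] R}

theorem map_mul_eq_zero_of_degree_lt (hmonic : ∀ n, (P n).Monic)
    (hdeg : ∀ n, (P n).natDegree = n) (horth : ∀ n m, n ≠ m → φ (P n * P m) = 0) {n : ℕ}
    {r : R[X]} (hr : r.degree < n) : φ (P n * r) = 0 :=
  map_eq_zero_of_degree_lt (ψ := φ ∘ₗ LinearMap.mulLeft R (P n)) hmonic hdeg
    (fun m hm => horth n m hm.ne') hr

theorem apply_eq_C_mul_of_symmetric (hφ : ∀ p, p ≠ 0 → φ (p * p) ≠ 0)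
    (hmonic : ∀ n, (P n).Monic) (hdeg : ∀ n, (P n).natDegree = n)
    (horth : ∀ n m, n ≠ m → φ (P n * P m) = 0) {L : R[X] → R[X]}
    (hL : ∀ p, (L p).natDegree ≤ p.natDegree) (hsymm : ∀ p r, φ (L p * r) = φ (p * L r))
    (n : ℕ) : L (P n) = C ((L (P n)).coeff n) * P n := by
  set c := (L (P n)).coeff n
  set E := L (P n) - C c * P n
  have hPn : (P n).coeff n = 1 := by simpa [hdeg n] using (hmonic n).coeff_natDegree
  have hE : E.degree < n := by
    refine (degree_lt_iff_coeff_zero _ _).2 fun k hk => ?_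
    rcases hk.eq_or_lt with rfl | hk
    · simp [E, c, hPn]
    · have hLk : (L (P n)).coeff k = 0 :=
        coeff_eq_zero_of_natDegree_lt ((hL _).trans_lt (by rwa [hdeg]))
      have hPk : (P n).coeff k = 0 := coeff_eq_zero_of_natDegree_lt (by rwa [hdeg])
      simp [E, hLk, hPk]
  have hElow : ∀ m < n, φ (E * P m) = 0 := fun m hm =>
    calc φ (E * P m) = φ (L (P n) * P m) - c * φ (P n * P m) := by
          simp [E, sub_mul, C_mul']
      _ = φ (P n * L (P m)) := by rw [hsymm, horth n m hm.ne', mul_zero, sub_zero]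
      _ = 0 := map_mul_eq_zero_of_degree_lt hmonic hdeg horth
          (degree_le_natDegree.trans_lt (WithBot.coe_lt_coe.2 ((hL _).trans_lt (by rwa [hdeg]))))
  have hEE : φ (E * E) = 0 :=
    map_eq_zero_of_degree_lt (ψ := φ ∘ₗ LinearMap.mulLeft R E) hmonic hdeg hElow hE
  exact sub_eq_zero.1 (not_not.1 fun hne => hφ E hne hEE)

end OrthogonalPolynomials

section QDerivative

variable {q : ℝ}

def qNat (q : ℝ) (n : ℕ) : ℝ := ∑ i ∈ Finset.range n, q ^ i

theorem qNat_eq (hq : q ≠ 1) (n : ℕ) : qNat q n = (1 - q ^ n) / (1 - q) := by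
  rw [eq_div_iff (sub_ne_zero.2 hq.symm), mul_comm, qNat, mul_neg_geom_sum]

theorem qD_mul (f g : ℝ → ℝ) (x : ℝ) :
    qD q (fun y => f y * g y) x = f x * qD q g x + qD q f x * g (q * x) := by
  simp only [qD]
  ring

theorem qD_sub (f g : ℝ → ℝ) (x : ℝ) :
    qD q (fun y => f y - g y) x = qD q f x - qD q g x := by
  simp only [qD]
  ring

theorem coeff_qDerivP (p : ℝ[X]) (k : ℕ) :
    (qDerivP q p).coeff k = qNat q (k + 1) * p.coeff (k + 1) := by
  rw [qDerivP, Polynomial.sum, finsetSum_coeff, Finset.sum_eq_single (k + 1)]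
  · rw [coeff_C_mul, coeff_X_pow, Nat.add_sub_cancel, if_pos rfl, qNat]
    ring
  · rintro (_ | n) _ hn
    · simp
    · rw [coeff_C_mul, coeff_X_pow, if_neg (by omega), mul_zero]
  · intro hk
    simp [notMem_support_iff.1 hk]

theorem qDerivP_C (c : ℝ) : qDerivP q (C c) = 0 := by
  ext k
  simp [coeff_qDerivP]

theorem natDegree_qDerivP_le (p : ℝ[X]) : (qDerivP q p).natDegree ≤ p.natDegree - 1 :=
  natDegree_le_iff_coeff_eq_zero.2 fun k hk => by
    rw [coeff_qDerivP, coeff_eq_zero_of_natDegree_lt (by omega), mul_zero]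

theorem C_mul_X_mul_qDerivP (p : ℝ[X]) :
    C (1 - q) * X * qDerivP q p = p - p.comp (C q * X) := by
  ext k
  rcases k with _ | k
  · simp
  · rw [mul_assoc, coeff_C_mul, coeff_X_mul, coeff_qDerivP, coeff_sub, comp_C_mul_X_coeff, qNat,
      ← mul_assoc, mul_neg_geom_sum]
    ring

theorem eval_qDerivP (hq : q ≠ 1) (p : ℝ[X]) {ω : ℝ} (hω : ω ≠ 0) :
    (qDerivP q p).eval ω = qD q p.eval ω := by
  have h := congrArg (eval ω) (C_mul_X_mul_qDerivP (q := q) p)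
  simp only [eval_mul, eval_C, eval_X, eval_sub, eval_comp] at h
  rw [qD, ← h]
  field_simp [sub_ne_zero.2 hq.symm]

theorem coeff_mul_qDerivP {F p : ℝ[X]} {d m : ℕ} (hF : F.natDegree ≤ d + 1)
    (hp : p.natDegree ≤ m + 1) :
    (F * qDerivP q p).coeff (d + 1 + m) = F.coeff (d + 1) * qNat q (m + 1) * p.coeff (m + 1) := by
  rw [coeff_mul_add_eq_of_natDegree_le hF ((natDegree_qDerivP_le p).trans (by omega)),
    coeff_qDerivP, mul_assoc]

end QDerivative

section HahnOperator

variable {q : ℝ} {A B : ℝ[X]}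

/-- The dilation `Q⁻¹` of the paper is composition with `q⁻¹ X`. -/
noncomputable def hahnOp (q : ℝ) (A B p : ℝ[X]) : ℝ[X] :=
  A * qDerivP q p + B * qDerivP q ((qDerivP q p).comp (C q⁻¹ * X))

noncomputable def hahnEigenvalue (q a₁ b₂ : ℝ) (n : ℕ) : ℝ :=
  a₁ * qNat q n + b₂ * qNat q n * qNat q (n - 1) * q⁻¹ ^ (n - 1)

theorem eval_hahnOp (hq : q ≠ 1) (p : ℝ[X]) {ω : ℝ} (hω : ω ≠ 0) :
    (hahnOp q A B p).eval ω = A.eval ω * (qDerivP q p).eval ω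
      + B.eval ω * qD q (fun x => (qDerivP q p).eval (q⁻¹ * x)) ω := by
  simp [hahnOp, eval_qDerivP hq _ hω]

theorem coeff_hahnOp (hA : A.natDegree ≤ 1) (hB : B.natDegree ≤ 2) {p : ℝ[X]} {n : ℕ}
    (hp : p.natDegree ≤ n) :
    (hahnOp q A B p).coeff n = hahnEigenvalue q (A.coeff 1) (B.coeff 2) n * p.coeff n := by
  rcases n with _ | m
  · rw [eq_C_of_natDegree_le_zero hp, hahnOp, qDerivP_C, zero_comp, ← C_0, qDerivP_C]
    simp [hahnEigenvalue, qNat]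
  have hDp : (qDerivP q p).natDegree ≤ m := (natDegree_qDerivP_le p).trans (by omega)
  have hAterm : (A * qDerivP q p).coeff (m + 1) = A.coeff 1 * qNat q (m + 1) * p.coeff (m + 1) := by
    simpa [add_comm 1 m] using coeff_mul_qDerivP (d := 0) hA hp
  rcases m with _ | k
  · obtain ⟨c, hc⟩ : ∃ c, qDerivP q p = C c := ⟨_, eq_C_of_natDegree_le_zero hDp⟩
    rw [hahnOp, coeff_add, hAterm, hc, C_comp, qDerivP_C, mul_zero, coeff_zero, hahnEigenvalue]
    simp [qNat]
  · have hX : (C q⁻¹ * X).natDegree ≤ 1 := (natDegree_C_mul_le _ _).trans natDegree_X_le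
    have hdil : ((qDerivP q p).comp (C q⁻¹ * X)).natDegree ≤ k + 1 :=
      natDegree_comp_le.trans ((Nat.mul_le_mul hDp hX).trans_eq (mul_one _))
    have hBterm := coeff_mul_qDerivP (q := q) (d := 1) hB hdil
    rw [comp_C_mul_X_coeff, coeff_qDerivP, show 1 + 1 + k = k + 2 by omega] at hBterm
    rw [hahnOp, coeff_add, hAterm, hBterm, hahnEigenvalue, Nat.add_sub_cancel]
    ring

theorem natDegree_hahnOp_le (hA : A.natDegree ≤ 1) (hB : B.natDegree ≤ 2) (p : ℝ[X]) :
    (hahnOp q A B p).natDegree ≤ p.natDegree :=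
  natDegree_le_iff_coeff_eq_zero.2 fun k hk => by
    rw [coeff_hahnOp hA hB hk.le, coeff_eq_zero_of_natDegree_lt hk, mul_zero]

end HahnOperator

section Jackson

variable {q a b : ℝ}

theorem jackson_eq_sub_of_qD (hq0 : 0 ≤ q) (hq1 : q < 1) {H f : ℝ → ℝ}
    (hH : ContinuousAt H 0) (hf : ∀ x, x ≠ 0 → qD q H x = f x)
    (hs : Summable fun k : ℕ => q ^ k * (b * f (q ^ k * b) - a * f (q ^ k * a))) :
    jackson q a b f = H b - H a := by
  have hstep : ∀ x, (1 - q) * (x * f x) = H x - H (q * x) := by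
    intro x
    rcases eq_or_ne x 0 with rfl | hx
    · simp
    · rw [← hf x hx, qD]
      field_simp [sub_ne_zero.2 hq1.ne', hx]
  set u : ℕ → ℝ := fun k => H (q ^ k * b) - H (q ^ k * a)
  have hterm : ∀ k,
      (1 - q) * (q ^ k * (b * f (q ^ k * b) - a * f (q ^ k * a))) = u k - u (k + 1) := by
    intro k
    simp only [u, pow_succ', mul_assoc]
    linear_combination hstep (q ^ k * b) - hstep (q ^ k * a)
  have hu : Tendsto u atTop (𝓝 (H 0 - H 0)) := by
    have hqk := tendsto_pow_atTop_nhds_zero_of_lt_one hq0 hq1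
    refine (hH.tendsto.comp ?_).sub (hH.tendsto.comp ?_)
    · simpa using hqk.mul_const b
    · simpa using hqk.mul_const a
  have hpartial := (hs.hasSum.mul_left (1 - q)).tendsto_sum_nat
  simp only [hterm, Finset.sum_range_sub'] at hpartial
  rw [jackson, tendsto_nhds_unique hpartial (tendsto_const_nhds.sub hu)]
  simp [u]

end Jackson

section Symmetry

variable {q a b : ℝ} {A B : ℝ[X]} {ϱ : ℝ → ℝ}

noncomputable def hahnFlux (q : ℝ) (B : ℝ[X]) (ϱ : ℝ → ℝ) (s : ℝ[X]) (y : ℝ) : ℝ :=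
  ϱ y * B.eval y * (qDerivP q s).eval (q⁻¹ * y)

theorem qD_hahnFlux (hq0 : q ≠ 0) (hq1 : q ≠ 1) {x : ℝ} (hx : x ≠ 0)
    (hPearson : qD q (fun y => ϱ y * B.eval y) x = ϱ x * A.eval x) (s : ℝ[X]) :
    qD q (hahnFlux q B ϱ s) x = ϱ x * (hahnOp q A B s).eval x := by
  rw [eval_hahnOp hq1 s hx, mul_add, ← mul_assoc, ← hPearson]
  simp only [qD, hahnFlux, inv_mul_cancel_left₀ hq0]
  field_simp [sub_ne_zero.2 hq1.symm, hx]
  ring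

theorem qD_green (hq0 : q ≠ 0) (hq1 : q ≠ 1) {x : ℝ} (hx : x ≠ 0)
    (hPearson : qD q (fun y => ϱ y * B.eval y) x = ϱ x * A.eval x) (p r : ℝ[X]) :
    qD q (fun y => r.eval y * hahnFlux q B ϱ p y - p.eval y * hahnFlux q B ϱ r y) x
      = (hahnOp q A B p * r - p * hahnOp q A B r).eval x * ϱ x := by
  rw [qD_sub, qD_mul, qD_mul, qD_hahnFlux hq0 hq1 hx hPearson,
    qD_hahnFlux hq0 hq1 hx hPearson, ← eval_qDerivP hq1 _ hx, ← eval_qDerivP hq1 _ hx]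
  simp only [hahnFlux, inv_mul_cancel_left₀ hq0, eval_sub, eval_mul]
  ring

theorem jackson_hahnOp_mul_sub_eq_zero (hq0 : 0 < q) (hq1 : q < 1) (hcont : ContinuousAt ϱ 0)
    (hPearson : ∀ ω : ℝ, ω ≠ 0 → qD q (fun x => ϱ x * B.eval x) ω = ϱ ω * A.eval ω)
    (hbdry : ϱ a * B.eval a = 0 ∧ ϱ b * B.eval b = 0) (p r : ℝ[X])
    (hs : JacksonSummable q a b fun ω => (hahnOp q A B p * r - p * hahnOp q A B r).eval ω * ϱ ω) :
    jackson q a b (fun ω => (hahnOp q A B p * r - p * hahnOp q A B r).eval ω * ϱ ω) = 0 := by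
  have hflux : ∀ s : ℝ[X], ContinuousAt (hahnFlux q B ϱ s) 0 := fun s =>
    (hcont.mul B.continuousAt).mul
      ((qDerivP q s).continuous.comp (continuous_const_mul _)).continuousAt
  rw [jackson_eq_sub_of_qD hq0.le hq1
    ((r.continuousAt.mul (hflux p)).sub (p.continuousAt.mul (hflux r)))
    (fun x hx => qD_green hq0.ne' hq1.ne hx (hPearson x hx) p r) hs.of_abs]
  simp [hahnFlux, hbdry.1, hbdry.2]

noncomputable def jacksonMoment (q a b : ℝ) (ϱ : ℝ → ℝ)
    (hsum : ∀ p : ℝ[X], JacksonSummable q a b fun ω => p.eval ω * ϱ ω) : ℝ[X] →ₗ[ℝ] ℝ where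
  toFun p := jackson q a b fun ω => p.eval ω * ϱ ω
  map_add' p r := by
    simp only [jackson]
    rw [← mul_add, ← (hsum p).of_abs.tsum_add (hsum r).of_abs]
    congr 1
    exact tsum_congr fun k => by simp only [eval_add]; ring
  map_smul' c p := by
    simp only [jackson, smul_eq_mul, RingHom.id_apply]
    rw [mul_left_comm c]
    congr 1
    rw [← tsum_mul_left]
    exact tsum_congr fun k => by simp only [eval_smul, smul_eq_mul]; ring

end Symmetry

theorem stmt_4_general (q a₀ a₁ b₀ b₁ b₂ a b : ℝ) (hq0 : 0 < q) (hq1 : q < 1)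
    (A B : Polynomial ℝ)
    (hA : A = Polynomial.C a₁ * Polynomial.X + Polynomial.C a₀)
    (hB : B = Polynomial.C b₂ * Polynomial.X ^ 2 + Polynomial.C b₁ * Polynomial.X
      + Polynomial.C b₀)
    (ϱ : ℝ → ℝ) (hcont : ContinuousAt ϱ 0)
    (hPearson : ∀ ω : ℝ, ω ≠ 0 →
      qD q (fun x => ϱ x * B.eval x) ω = ϱ ω * A.eval ω)
    (hbdry : ϱ a * B.eval a = 0 ∧ ϱ b * B.eval b = 0)
    (hsum : ∀ p : Polynomial ℝ, JacksonSummable q a b (fun ω => p.eval ω * ϱ ω))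
    (hposdef : ∀ p : Polynomial ℝ, p ≠ 0 →
      0 < jackson q a b (fun ω => (p.eval ω) ^ 2 * ϱ ω))
    (P : ℕ → Polynomial ℝ)
    (hmonic : ∀ n : ℕ, (P n).Monic)
    (hdeg : ∀ n : ℕ, (P n).natDegree = n)
    (horth : ∀ n m : ℕ, n ≠ m →
      jackson q a b (fun ω => (P n).eval ω * (P m).eval ω * ϱ ω) = 0) :
    ∀ n : ℕ, ∀ ω : ℝ, ω ≠ 0 →
      A.eval ω * (qDerivP q (P n)).eval ω
        + B.eval ω * qD q (fun x => (qDerivP q (P n)).eval (q⁻¹ * x)) ω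
      = (a₁ * ((1 - q ^ n) / (1 - q))
          + b₂ * ((1 - q ^ n) / (1 - q)) * ((1 - q ^ (n - 1)) / (1 - q)) * q⁻¹ ^ (n - 1))
        * (P n).eval ω := by
  intro n ω hω
  have hAdeg : A.natDegree ≤ 1 := hA ▸ natDegree_linear_le
  have hBdeg : B.natDegree ≤ 2 := hB ▸ natDegree_quadratic_le
  set φ := jacksonMoment q a b ϱ hsum
  have hφ : ∀ p, p ≠ 0 → φ (p * p) ≠ 0 := fun p hp => by
    simpa [φ, jacksonMoment, sq] using (hposdef p hp).ne'
  have hφorth : ∀ n m, n ≠ m → φ (P n * P m) = 0 := fun n m hnm => by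
    simpa [φ, jacksonMoment] using horth n m hnm
  have hsymm : ∀ p r, φ (hahnOp q A B p * r) = φ (p * hahnOp q A B r) := fun p r =>
    sub_eq_zero.1 <| by
      rw [← map_sub]
      exact jackson_hahnOp_mul_sub_eq_zero hq0 hq1 hcont hPearson hbdry p r (hsum _)
  have hPn : (P n).coeff n = 1 := by simpa [hdeg n] using (hmonic n).coeff_natDegree
  have heig := apply_eq_C_mul_of_symmetric hφ hmonic hdeg hφorth
    (natDegree_hahnOp_le hAdeg hBdeg) hsymm n
  rw [← eval_hahnOp hq1.ne _ hω, heig, coeff_hahnOp hAdeg hBdeg (hdeg n).le, hPn, mul_one,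
    eval_mul, eval_C, hahnEigenvalue, qNat_eq hq1.ne, qNat_eq hq1.ne]
  simp [hA, hB]

/-- Under Pearson data `(A, B)` on `[a,b]` with weight `ϱ` (continuous at
`0`, q-Pearson equation, boundary conditions) whose moment functional
`p ↦ ∫_a^b p ϱ d_qω` is positive definite, the monic orthogonal polynomial system
`(P̃_n)` satisfies the Hahn q-difference equation
`A(ω)(∂_q P̃_n)(ω) + B(ω)(∂_q(Q^{−1}(∂_q P̃_n)))(ω) = λ_n P̃_n(ω)` for `ω ≠ 0`, where
`(Q^{−1}g)(ω) = g(q^{−1}ω)` and `λ_n = a₁[n] + b₂[n][n−1]q^{−(n−1)}`,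
`[m] = (1−q^m)/(1−q)`. -/
theorem stmt_4 (q a₀ a₁ b₀ b₁ b₂ a b : ℝ) (hq0 : 0 < q) (hq1 : q < 1)
    (hab : a ≤ 0 ∧ 0 ≤ b)
    (A B : Polynomial ℝ)
    (hA : A = Polynomial.C a₁ * Polynomial.X + Polynomial.C a₀)
    (hB : B = Polynomial.C b₂ * Polynomial.X ^ 2 + Polynomial.C b₁ * Polynomial.X
      + Polynomial.C b₀)
    (ϱ : ℝ → ℝ) (hcont : ContinuousAt ϱ 0)
    (hPearson : ∀ ω : ℝ, ω ≠ 0 →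
      qD q (fun x => ϱ x * B.eval x) ω = ϱ ω * A.eval ω)
    (hbdry : ϱ a * B.eval a = 0 ∧ ϱ b * B.eval b = 0)
    (hsum : ∀ p : Polynomial ℝ, JacksonSummable q a b (fun ω => p.eval ω * ϱ ω))
    (hposdef : ∀ p : Polynomial ℝ, p ≠ 0 →
      0 < jackson q a b (fun ω => (p.eval ω) ^ 2 * ϱ ω))
    (P : ℕ → Polynomial ℝ)
    (hmonic : ∀ n : ℕ, (P n).Monic)
    (hdeg : ∀ n : ℕ, (P n).natDegree = n)
    (horth : ∀ n m : ℕ, n ≠ m →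
      jackson q a b (fun ω => (P n).eval ω * (P m).eval ω * ϱ ω) = 0) :
    ∀ n : ℕ, ∀ ω : ℝ, ω ≠ 0 →
      A.eval ω * (qDerivP q (P n)).eval ω
        + B.eval ω * qD q (fun x => (qDerivP q (P n)).eval (q⁻¹ * x)) ω
      = (a₁ * ((1 - q ^ n) / (1 - q))
          + b₂ * ((1 - q ^ n) / (1 - q)) * ((1 - q ^ (n - 1)) / (1 - q)) * q⁻¹ ^ (n - 1))
        * (P n).eval ω :=
  stmt_4_general q a₀ a₁ b₀ b₁ b₂ a b hq0 hq1 A B hA hB ϱ hcont hPearson hbdry hsum hposdef P hmonic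
    hdeg horth
end

section
/- Let 0 < q < 1 and let A(ω) = a₁ω + a₀, B(ω) = b₂ω² + b₁ω + b₀ be complex polynomials with b₀ ≠ 0, b₂ ≠ 0, b₁ − (1−q)a₀ ≠ 0 and b₂ − (1−q)a₁ = 0. Write B(ω) = b₂(ω−a)(ω−b) with roots a, b ≠ 0, and let c = −b₀/(b₁ − (1−q)a₀) ≠ 0 be the root of the linear polynomial B(ω) − (1−q)ω·A(ω) = (b₁ − (1−q)a₀)ω + b₀. Then ϱ(ω) := (qω/a; q)_∞ · (qω/b; q)_∞ / (ω/c; q)_∞, defined where the denominator is nonzero, satisfies ϱ(ω)·(B(ω) − (1−q)ω·A(ω)) = B(qω)·ϱ(qω) at every ω where both ϱ(ω) and ϱ(qω) are defined. -/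
/-!
Peeling the first factor off each Pochhammer symbol, `(x; q)_∞ = (1 - x) (qx; q)_∞`, reduces
the equation to the polynomial identities `B(qω) = b₀ (1 - qω/a)(1 - qω/b)` (since `b₀ = b₂ab`)
and `B(ω) - (1-q)ωA(ω) = b₀ (1 - ω/c)`.
-/

/-- The infinite q-Pochhammer symbol `(x; q)_∞ = ∏_{k=0}^∞ (1 − qᵏx)` over `ℂ`. -/
noncomputable def qPoch (q : ℝ) (x : ℂ) : ℂ :=
  ∏' k : ℕ, (1 - (q : ℂ) ^ k * x)

lemma multipliable_one_sub_pow_mul {q : ℝ} (hq : |q| < 1) (x : ℂ) :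
    Multipliable fun k : ℕ => 1 - (q : ℂ) ^ k * x := by
  have hgeom : Summable fun k : ℕ => (q : ℂ) ^ k :=
    summable_geometric_of_norm_lt_one (by rwa [Complex.norm_real, Real.norm_eq_abs])
  simpa only [sub_eq_add_neg] using
    Complex.multipliable_one_add_of_summable (hgeom.mul_right x).neg

lemma qPoch_eq_one_sub_mul {q : ℝ} (hq : |q| < 1) (x : ℂ) :
    qPoch q x = (1 - x) * qPoch q (q * x) := by
  have hshift : Multipliable fun k : ℕ => 1 - (q : ℂ) ^ (k + 1) * x := by
    simpa only [pow_succ, mul_assoc] using multipliable_one_sub_pow_mul hq ((q : ℂ) * x)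
  rw [qPoch, tprod_eq_zero_mul' (f := fun k : ℕ => 1 - (q : ℂ) ^ k * x) hshift]
  simp only [qPoch, pow_zero, one_mul, pow_succ, mul_assoc]

lemma qPoch_div_eq_one_sub_mul {q : ℝ} (hq : |q| < 1) (x d : ℂ) :
    qPoch q (x / d) = (1 - x / d) * qPoch q (q * x / d) := by
  rw [qPoch_eq_one_sub_mul hq, mul_div_assoc]

theorem stmt_7_general (q : ℝ) (hq0 : 0 < q) (hq1 : q < 1)
    (a₀ b₀ b₁ b₂ a b c : ℂ)
    (A B : ℂ → ℂ)
    (hB : ∀ ω : ℂ, B ω = b₂ * ω ^ 2 + b₁ * ω + b₀)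
    (hb₀ : b₀ ≠ 0)
    (ha : a ≠ 0) (hb : b ≠ 0)
    (hBroots : ∀ ω : ℂ, B ω = b₂ * (ω - a) * (ω - b))
    (hcdef : c = -b₀ / (b₁ - (1 - (q : ℂ)) * a₀))
    (hCroot : ∀ ω : ℂ, B ω - (1 - (q : ℂ)) * ω * A ω
      = (b₁ - (1 - (q : ℂ)) * a₀) * ω + b₀)
    (ϱ : ℂ → ℂ)
    (hϱ : ∀ ω : ℂ, ϱ ω =
      qPoch q ((q : ℂ) * ω / a) * qPoch q ((q : ℂ) * ω / b) / qPoch q (ω / c)) :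
    ∀ ω : ℂ, qPoch q (ω / c) ≠ 0 → qPoch q ((q : ℂ) * ω / c) ≠ 0 →
      ϱ ω * (B ω - (1 - (q : ℂ)) * ω * A ω) = B ((q : ℂ) * ω) * ϱ ((q : ℂ) * ω) := by
  intro ω hω _
  have hq : |q| < 1 := abs_lt.mpr ⟨by linarith, hq1⟩
  have hωc : 1 - ω / c ≠ 0 :=
    left_ne_zero_of_mul (qPoch_div_eq_one_sub_mul hq ω c ▸ hω)
  have hb₀_eq : b₀ = b₂ * a * b := by linear_combination hBroots 0 - hB 0
  have hC : B ω - (1 - (q : ℂ)) * ω * A ω = b₀ * (1 - ω / c) := by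
    rw [hCroot, hcdef, div_div_eq_mul_div]; field_simp; ring
  have hBq : B (q * ω) = b₀ * (1 - q * ω / a) * (1 - q * ω / b) := by
    rw [hBroots, hb₀_eq]; field_simp; ring
  rw [hϱ, hϱ, hC, hBq, qPoch_div_eq_one_sub_mul hq (q * ω) a,
    qPoch_div_eq_one_sub_mul hq (q * ω) b, qPoch_div_eq_one_sub_mul hq ω c]
  field_simp

/-- Let `0 < q < 1` and `A(ω) = a₁ω + a₀`, `B(ω) = b₂ω² + b₁ω + b₀` be
complex polynomials with `b₀ ≠ 0`, `b₂ ≠ 0`, `b₁ − (1−q)a₀ ≠ 0` and `b₂ − (1−q)a₁ = 0`.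
Write `B(ω) = b₂(ω−a)(ω−b)` with roots `a, b ≠ 0`, and let `c = −b₀/(b₁ − (1−q)a₀) ≠ 0`
be the root of the linear polynomial `B(ω) − (1−q)ωA(ω) = (b₁ − (1−q)a₀)ω + b₀`.  Then
`ϱ(ω) = (qω/a;q)_∞(qω/b;q)_∞ / (ω/c;q)_∞` satisfies
`ϱ(ω)(B(ω) − (1−q)ωA(ω)) = B(qω)ϱ(qω)` wherever both `ϱ(ω)` and `ϱ(qω)` are defined. -/
theorem stmt_7 (q : ℝ) (hq0 : 0 < q) (hq1 : q < 1)
    (a₀ a₁ b₀ b₁ b₂ a b c : ℂ)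
    (A B : ℂ → ℂ)
    (hA : ∀ ω : ℂ, A ω = a₁ * ω + a₀)
    (hB : ∀ ω : ℂ, B ω = b₂ * ω ^ 2 + b₁ * ω + b₀)
    (hb₀ : b₀ ≠ 0) (hb₂ : b₂ ≠ 0)
    (hlin : b₁ - (1 - (q : ℂ)) * a₀ ≠ 0) (hlead : b₂ - (1 - (q : ℂ)) * a₁ = 0)
    (ha : a ≠ 0) (hb : b ≠ 0) (hc : c ≠ 0)
    (hBroots : ∀ ω : ℂ, B ω = b₂ * (ω - a) * (ω - b))
    (hcdef : c = -b₀ / (b₁ - (1 - (q : ℂ)) * a₀))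
    (hCroot : ∀ ω : ℂ, B ω - (1 - (q : ℂ)) * ω * A ω
      = (b₁ - (1 - (q : ℂ)) * a₀) * ω + b₀)
    (ϱ : ℂ → ℂ)
    (hϱ : ∀ ω : ℂ, ϱ ω =
      qPoch q ((q : ℂ) * ω / a) * qPoch q ((q : ℂ) * ω / b) / qPoch q (ω / c)) :
    ∀ ω : ℂ, qPoch q (ω / c) ≠ 0 → qPoch q ((q : ℂ) * ω / c) ≠ 0 →
      ϱ ω * (B ω - (1 - (q : ℂ)) * ω * A ω) = B ((q : ℂ) * ω) * ϱ ((q : ℂ) * ω) :=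
  stmt_7_general q hq0 hq1 a₀ b₀ b₁ b₂ a b c A B hB hb₀ ha hb hBroots hcdef hCroot ϱ hϱ
end

section
/- Let 0 < q < 1, let A(ω) = a₁ω + a₀, B(ω) = b₂ω² + b₁ω + b₀ be real polynomials, let a ≤ 0 ≤ b, and let ϱ : ℝ → ℝ be continuous at 0, satisfy the q-Pearson equation ∂_q(ϱ·B)(ω) = ϱ(ω)A(ω) for all ω ≠ 0, and satisfy ϱ(a)B(a) = ϱ(b)B(b) = 0. Assume that for every n ≥ 0 the Jackson integral μ_n := ∫_a^b ωⁿ ϱ(ω) d_qω converges absolutely. Then the moments satisfy a₁μ₁ + a₀μ₀ = 0 and, for every n ≥ 1, −[n]·(b₂μ_{n+1} + b₁μ_n + b₀μ_{n−1}) = qⁿ·(a₁μ_{n+1} + a₀μ_n), where [n] = (1−qⁿ)/(1−q). -/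
/-!
The Jackson integral of a q-derivative telescopes: `∫_a^b ∂_q h d_qω = h(b) − h(a)`, the tail
`h(qᵏb) − h(qᵏa)` tending to `h(0) − h(0) = 0` by continuity at `0`. Apply this to
`h = ωⁿ ϱ B`, which vanishes at `a` and `b`, and expand `∂_q h` by the q-product rule
`∂_q(ωⁿ g) = qⁿ ωⁿ ∂_q g + [n] ωⁿ⁻¹ g`: this gives `qⁿ ∫ ωⁿ ∂_q(ϱB) = −[n] ∫ ωⁿ⁻¹ ϱB`. The
Pearson equation replaces `∂_q(ϱB)` by `ϱA`, and expanding `A` and `B` in powers of `ω` turns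
both sides into moments; `n = 0` is the same identity with `[0] = 0`.
-/

open Filter Topology

theorem tsum_sub_succ_eq_of_tendsto {G : Type*} [AddCommGroup G] [TopologicalSpace G]
    [IsTopologicalAddGroup G] [T2Space G] {u : ℕ → G} {l : G}
    (hs : Summable fun k => u k - u (k + 1)) (hu : Tendsto u atTop (𝓝 l)) :
    ∑' k, (u k - u (k + 1)) = u 0 - l := by
  refine (hs.hasSum_iff_tendsto_nat.mpr ?_).tsum_eq
  simp_rw [Finset.sum_range_sub']
  exact tendsto_const_nhds.sub hu

-- Holds for all `q` and `ω` because of the junk value `x / 0 = 0`.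
theorem mul_qD (q : ℝ) (f : ℝ → ℝ) (ω : ℝ) :
    ω * qD q f ω = (f ω - f (q * ω)) / (1 - q) := by
  rcases eq_or_ne ω 0 with rfl | hω
  · simp
  · rw [qD, mul_div_assoc', mul_comm ω, mul_div_mul_right _ _ hω]

-- At `n = 0` the truncated `n - 1` is harmless, as `[0] = 0`.
theorem qD_pow_mul {q : ℝ} (hq : q ≠ 1) (n : ℕ) (f : ℝ → ℝ) {ω : ℝ} (hω : ω ≠ 0) :
    qD q (fun x => x ^ n * f x) ω =
      q ^ n * (ω ^ n * qD q f ω) + (1 - q ^ n) / (1 - q) * (ω ^ (n - 1) * f ω) := by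
  cases n with
  | zero => simp
  | succ m =>
    simp only [qD, Nat.add_sub_cancel, mul_pow, pow_succ]
    field_simp
    ring

section Jackson

variable {q a b : ℝ} {f g : ℝ → ℝ}

def jacksonTerm (q a b : ℝ) (f : ℝ → ℝ) (k : ℕ) : ℝ :=
  q ^ k * (b * f (q ^ k * b) - a * f (q ^ k * a))

theorem jackson_eq_tsum_jacksonTerm : jackson q a b f = (1 - q) * ∑' k, jacksonTerm q a b f k :=
  rfl

theorem jacksonTerm_eq (k : ℕ) :
    jacksonTerm q a b f k = q ^ k * b * f (q ^ k * b) - q ^ k * a * f (q ^ k * a) := by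
  rw [jacksonTerm]; ring

theorem jacksonTerm_congr (h : ∀ ω, ω ≠ 0 → f ω = g ω) :
    jacksonTerm q a b f = jacksonTerm q a b g := by
  have hmul : ∀ x, x * f x = x * g x := by
    intro x
    rcases eq_or_ne x 0 with rfl | hx
    · simp
    · rw [h x hx]
  funext k
  rw [jacksonTerm_eq, jacksonTerm_eq, hmul, hmul (q ^ k * a)]

theorem jacksonTerm_add (k : ℕ) :
    jacksonTerm q a b (fun ω => f ω + g ω) k = jacksonTerm q a b f k + jacksonTerm q a b g k := by
  simp only [jacksonTerm]; ring

theorem jacksonTerm_const_mul (c : ℝ) (k : ℕ) :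
    jacksonTerm q a b (fun ω => c * f ω) k = c * jacksonTerm q a b f k := by
  simp only [jacksonTerm]; ring

theorem JacksonSummable.summable (hf : JacksonSummable q a b f) : Summable (jacksonTerm q a b f) :=
  summable_abs_iff.mp hf

theorem JacksonSummable.of_summable (hf : Summable (jacksonTerm q a b f)) :
    JacksonSummable q a b f :=
  summable_abs_iff.mpr hf

theorem JacksonSummable.congr (hf : JacksonSummable q a b f) (h : ∀ ω, ω ≠ 0 → f ω = g ω) :
    JacksonSummable q a b g :=
  .of_summable (jacksonTerm_congr h ▸ hf.summable)

theorem JacksonSummable.add (hf : JacksonSummable q a b f) (hg : JacksonSummable q a b g) :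
    JacksonSummable q a b (fun ω => f ω + g ω) :=
  .of_summable <| (hf.summable.add hg.summable).congr fun k => (jacksonTerm_add k).symm

theorem JacksonSummable.const_mul (hf : JacksonSummable q a b f) (c : ℝ) :
    JacksonSummable q a b (fun ω => c * f ω) :=
  .of_summable <| (hf.summable.mul_left c).congr fun k => (jacksonTerm_const_mul c k).symm

theorem jackson_congr (h : ∀ ω, ω ≠ 0 → f ω = g ω) : jackson q a b f = jackson q a b g := by
  simp only [jackson_eq_tsum_jacksonTerm, jacksonTerm_congr h]

theorem jackson_add (hf : JacksonSummable q a b f) (hg : JacksonSummable q a b g) :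
    jackson q a b (fun ω => f ω + g ω) = jackson q a b f + jackson q a b g := by
  simp only [jackson_eq_tsum_jacksonTerm, jacksonTerm_add, hf.summable.tsum_add hg.summable]
  ring

theorem jackson_const_mul (c : ℝ) : jackson q a b (fun ω => c * f ω) = c * jackson q a b f := by
  simp only [jackson_eq_tsum_jacksonTerm, jacksonTerm_const_mul, tsum_mul_left]
  ring

theorem jacksonTerm_qD (h : ℝ → ℝ) (k : ℕ) :
    jacksonTerm q a b (qD q h) k =
      (h (q ^ k * b) - h (q ^ k * a) - (h (q ^ (k + 1) * b) - h (q ^ (k + 1) * a))) / (1 - q) := by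
  have hb : q ^ (k + 1) * b = q * (q ^ k * b) := by ring
  have ha : q ^ (k + 1) * a = q * (q ^ k * a) := by ring
  rw [jacksonTerm_eq, mul_qD, mul_qD, hb, ha]
  ring

theorem jackson_qD {h : ℝ → ℝ} (hq0 : 0 ≤ q) (hq1 : q < 1) (hh : ContinuousAt h 0)
    (hs : JacksonSummable q a b (qD q h)) : jackson q a b (qD q h) = h b - h a := by
  set u : ℕ → ℝ := fun k => h (q ^ k * b) - h (q ^ k * a)
  have hq : 1 - q ≠ 0 := by linarith
  have hterm : jacksonTerm q a b (qD q h) = fun k => (u k - u (k + 1)) / (1 - q) :=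
    funext (jacksonTerm_qD h)
  have hu : Tendsto u atTop (𝓝 0) := by
    have hpow := tendsto_pow_atTop_nhds_zero_of_lt_one hq0 hq1
    have hb := hh.tendsto.comp (by simpa using hpow.mul_const b)
    have ha := hh.tendsto.comp (by simpa using hpow.mul_const a)
    simpa using hb.sub ha
  have hs' : Summable fun k => u k - u (k + 1) := by
    refine (hs.summable.mul_left (1 - q)).congr fun k => ?_
    rw [hterm]
    field_simp
  rw [jackson_eq_tsum_jacksonTerm, hterm, tsum_div_const, tsum_sub_succ_eq_of_tendsto hs' hu]
  field_simp
  simp [u]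

theorem jackson_pow_mul_qD (hq0 : 0 ≤ q) (hq1 : q < 1) (n : ℕ) (hg : ContinuousAt g 0)
    (ha : g a = 0) (hb : g b = 0) (hs₁ : JacksonSummable q a b fun ω => ω ^ n * qD q g ω)
    (hs₂ : JacksonSummable q a b fun ω => ω ^ (n - 1) * g ω) :
    q ^ n * jackson q a b (fun ω => ω ^ n * qD q g ω) =
      -((1 - q ^ n) / (1 - q)) * jackson q a b (fun ω => ω ^ (n - 1) * g ω) := by
  have hprod : ∀ ω, ω ≠ 0 → q ^ n * (ω ^ n * qD q g ω) + (1 - q ^ n) / (1 - q) * (ω ^ (n - 1) * g ω)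
      = qD q (fun x => x ^ n * g x) ω :=
    fun ω hω => (qD_pow_mul hq1.ne n g hω).symm
  have hs := (hs₁.const_mul (q ^ n)).add (hs₂.const_mul ((1 - q ^ n) / (1 - q)))
  have hcont : ContinuousAt (fun x => x ^ n * g x) 0 := (continuousAt_id.pow n).mul hg
  have hftc := jackson_qD hq0 hq1 hcont (hs.congr hprod)
  rw [← jackson_congr hprod, jackson_add (hs₁.const_mul _) (hs₂.const_mul _), jackson_const_mul,
    jackson_const_mul, ha, hb] at hftc
  linear_combination hftc

end Jackson

section Moments

variable {q a b : ℝ} {ϱ : ℝ → ℝ} (hsum : ∀ n : ℕ, JacksonSummable q a b fun ω => ω ^ n * ϱ ω)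
include hsum

theorem jacksonSummable_pow_mul_linear (c₁ c₀ : ℝ) (n : ℕ) :
    JacksonSummable q a b fun ω => ω ^ n * ((c₁ * ω + c₀) * ϱ ω) :=
  (((hsum (n + 1)).const_mul c₁).add ((hsum n).const_mul c₀)).congr fun ω _ => by ring

theorem jackson_pow_mul_linear (c₁ c₀ : ℝ) (n : ℕ) :
    jackson q a b (fun ω => ω ^ n * ((c₁ * ω + c₀) * ϱ ω)) =
      c₁ * jackson q a b (fun ω => ω ^ (n + 1) * ϱ ω) +
        c₀ * jackson q a b (fun ω => ω ^ n * ϱ ω) := by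
  rw [← jackson_const_mul, ← jackson_const_mul,
    ← jackson_add ((hsum (n + 1)).const_mul c₁) ((hsum n).const_mul c₀)]
  exact jackson_congr fun ω _ => by ring

theorem jacksonSummable_pow_mul_quadratic (c₂ c₁ c₀ : ℝ) (n : ℕ) :
    JacksonSummable q a b fun ω => ω ^ n * ((c₂ * ω ^ 2 + c₁ * ω + c₀) * ϱ ω) :=
  (((hsum (n + 2)).const_mul c₂).add (jacksonSummable_pow_mul_linear hsum c₁ c₀ n)).congr
    fun ω _ => by ring

theorem jackson_pow_mul_quadratic (c₂ c₁ c₀ : ℝ) (n : ℕ) :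
    jackson q a b (fun ω => ω ^ n * ((c₂ * ω ^ 2 + c₁ * ω + c₀) * ϱ ω)) =
      c₂ * jackson q a b (fun ω => ω ^ (n + 2) * ϱ ω) +
        c₁ * jackson q a b (fun ω => ω ^ (n + 1) * ϱ ω) +
          c₀ * jackson q a b (fun ω => ω ^ n * ϱ ω) := by
  rw [add_assoc, ← jackson_pow_mul_linear hsum, ← jackson_const_mul,
    ← jackson_add ((hsum (n + 2)).const_mul c₂) (jacksonSummable_pow_mul_linear hsum c₁ c₀ n)]
  exact jackson_congr fun ω _ => by ring

end Moments

theorem stmt_11_general (q a₀ a₁ b₀ b₁ b₂ a b : ℝ) (hq0 : 0 < q) (hq1 : q < 1)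
    (A B : ℝ → ℝ)
    (hA : ∀ ω : ℝ, A ω = a₁ * ω + a₀)
    (hB : ∀ ω : ℝ, B ω = b₂ * ω ^ 2 + b₁ * ω + b₀)
    (ϱ : ℝ → ℝ) (hcont : ContinuousAt ϱ 0)
    (hPearson : ∀ ω : ℝ, ω ≠ 0 →
      qD q (fun x => ϱ x * B x) ω = ϱ ω * A ω)
    (hbdry : ϱ a * B a = 0 ∧ ϱ b * B b = 0)
    (hsum : ∀ n : ℕ, JacksonSummable q a b (fun ω => ω ^ n * ϱ ω))
    (μ : ℕ → ℝ)
    (hμ : ∀ n : ℕ, μ n = jackson q a b (fun ω => ω ^ n * ϱ ω)) :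
    a₁ * μ 1 + a₀ * μ 0 = 0 ∧
    ∀ n : ℕ, 1 ≤ n →
      -((1 - q ^ n) / (1 - q)) * (b₂ * μ (n + 1) + b₁ * μ n + b₀ * μ (n - 1))
        = q ^ n * (a₁ * μ (n + 1) + a₀ * μ n) := by
  have hA' (n : ℕ) (ω : ℝ) (hω : ω ≠ 0) :
      ω ^ n * ((a₁ * ω + a₀) * ϱ ω) = ω ^ n * qD q (fun x => ϱ x * B x) ω := by
    rw [hPearson ω hω, hA, mul_comm (ϱ ω)]
  have hB' (n : ℕ) (ω : ℝ) (_ : ω ≠ 0) :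
      ω ^ n * ((b₂ * ω ^ 2 + b₁ * ω + b₀) * ϱ ω) = ω ^ n * (ϱ ω * B ω) := by
    rw [hB, mul_comm (ϱ ω)]
  have hBc : Continuous B := by rw [funext hB]; fun_prop
  have key (n : ℕ) :
      q ^ n * (a₁ * μ (n + 1) + a₀ * μ n) =
        -((1 - q ^ n) / (1 - q)) * (b₂ * μ (n - 1 + 2) + b₁ * μ (n - 1 + 1) + b₀ * μ (n - 1)) := by
    have h := jackson_pow_mul_qD (g := fun x => ϱ x * B x) hq0.le hq1 n
      (hcont.mul hBc.continuousAt) hbdry.1 hbdry.2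
      ((jacksonSummable_pow_mul_linear hsum a₁ a₀ n).congr (hA' n))
      ((jacksonSummable_pow_mul_quadratic hsum b₂ b₁ b₀ (n - 1)).congr (hB' (n - 1)))
    rwa [← jackson_congr (hA' n), ← jackson_congr (hB' (n - 1)), jackson_pow_mul_linear hsum,
      jackson_pow_mul_quadratic hsum, ← hμ, ← hμ, ← hμ, ← hμ, ← hμ] at h
  refine ⟨by simpa using key 0, fun n hn => ?_⟩
  obtain ⟨m, rfl⟩ := Nat.exists_eq_add_of_le' hn
  have h := key (m + 1)
  simp only [Nat.add_sub_cancel] at h ⊢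
  linear_combination -h

/-- Let `0 < q < 1`, `A(ω) = a₁ω + a₀`, `B(ω) = b₂ω² + b₁ω + b₀`,
`a ≤ 0 ≤ b`, and let `ϱ` be continuous at `0`, satisfy the q-Pearson equation for
`ω ≠ 0` and the boundary conditions `ϱ(a)B(a) = ϱ(b)B(b) = 0`.  Assume all the moments
`μ_n = ∫_a^b ωⁿ ϱ(ω) d_qω` converge absolutely.  Then `a₁μ₁ + a₀μ₀ = 0` and, for every
`n ≥ 1`, `−[n](b₂μ_{n+1} + b₁μ_n + b₀μ_{n−1}) = qⁿ(a₁μ_{n+1} + a₀μ_n)`, where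
`[n] = (1−qⁿ)/(1−q)`. -/
theorem stmt_11 (q a₀ a₁ b₀ b₁ b₂ a b : ℝ) (hq0 : 0 < q) (hq1 : q < 1)
    (hab : a ≤ 0 ∧ 0 ≤ b)
    (A B : ℝ → ℝ)
    (hA : ∀ ω : ℝ, A ω = a₁ * ω + a₀)
    (hB : ∀ ω : ℝ, B ω = b₂ * ω ^ 2 + b₁ * ω + b₀)
    (ϱ : ℝ → ℝ) (hcont : ContinuousAt ϱ 0)
    (hPearson : ∀ ω : ℝ, ω ≠ 0 →
      qD q (fun x => ϱ x * B x) ω = ϱ ω * A ω)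
    (hbdry : ϱ a * B a = 0 ∧ ϱ b * B b = 0)
    (hsum : ∀ n : ℕ, JacksonSummable q a b (fun ω => ω ^ n * ϱ ω))
    (μ : ℕ → ℝ)
    (hμ : ∀ n : ℕ, μ n = jackson q a b (fun ω => ω ^ n * ϱ ω)) :
    a₁ * μ 1 + a₀ * μ 0 = 0 ∧
    ∀ n : ℕ, 1 ≤ n →
      -((1 - q ^ n) / (1 - q)) * (b₂ * μ (n + 1) + b₁ * μ n + b₀ * μ (n - 1))
        = q ^ n * (a₁ * μ (n + 1) + a₀ * μ n) :=
  stmt_11_general q a₀ a₁ b₀ b₁ b₂ a b hq0 hq1 A B hA hB ϱ hcont hPearson hbdry hsum μ hμ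
end

section
/- Let 0 < q < 1, let a > 0 and let r be a real number with r > −1. Then ∫_0^a ω^r · (qω/a; q)_∞ d_qω = (1−q)·a^{r+1}·(q; q)_∞/(q^{r+1}; q)_∞; explicitly, (1−q)·a^{r+1}·∑_{k=0}^∞ q^{k(r+1)}·(q^{k+1}; q)_∞ = (1−q)·a^{r+1}·(q; q)_∞/(q^{r+1}; q)_∞. (When r is a nonnegative integer the right-hand side equals (1−q)·a^{r+1}·(q;q)_r with (q;q)_r = (1−q)(1−q²)⋯(1−q^r).) -/
/-- The infinite q-Pochhammer symbol `(x; q)_∞ = ∏_{k=0}^∞ (1 − qᵏx)` over `ℝ`. -/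
noncomputable def qPochR (q x : ℝ) : ℝ :=
  ∏' k : ℕ, (1 - q ^ k * x)

/-- The Jackson integral on `[0,a]`, `a > 0`: `∫_0^a f(ω) d_qω = (1−q)·a·∑_{k=0}^∞ qᵏf(qᵏa)`. -/
noncomputable def jackson0 (q a : ℝ) (f : ℝ → ℝ) : ℝ :=
  (1 - q) * a * ∑' k : ℕ, q ^ k * f (q ^ k * a)

/-! With `G(t) = ∑ tᵏ (q^{k+1}; q)_∞`, peeling the first factor off `(q^{k+1}; q)_∞` gives
`G(qt) = (1 - t) G(t)`, hence `G(qᴺt) = (t; q)_N G(t)`. As `N → ∞` the left side tends to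
`G(0) = (q; q)_∞` by dominated convergence, which is Euler's identity
`G(t) (t; q)_∞ = (q; q)_∞`.
The substitution `ω = qᵏa` turns the Jackson integral into `(1 - q) a^{r+1} G(q^{r+1})`. -/

open Real Filter Topology

section QPochhammer

variable {q : ℝ} (hq0 : 0 ≤ q) (hq1 : q < 1)
include hq0 hq1

lemma multipliable_qPochR (x : ℝ) : Multipliable fun k : ℕ => 1 - q ^ k * x := by
  simpa [sub_eq_add_neg] using Real.multipliable_one_add_of_summable
    ((summable_geometric_of_lt_one hq0 hq1).mul_right x).neg

lemma one_sub_pow_mul_pos {x : ℝ} (hx0 : 0 ≤ x) (hx1 : x < 1) (k : ℕ) : 0 < 1 - q ^ k * x := by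
  have : q ^ k * x ≤ x := mul_le_of_le_one_left hx0 (pow_le_one₀ hq0 hq1.le)
  linarith

lemma qPochR_pos {x : ℝ} (hx0 : 0 ≤ x) (hx1 : x < 1) : 0 < qPochR q x := by
  have hlog : Summable fun k : ℕ => log (1 - q ^ k * x) := by
    simpa [sub_eq_add_neg] using Real.summable_log_one_add_of_summable
      ((summable_geometric_of_lt_one hq0 hq1).mul_right x).neg
  rw [qPochR,
    (Real.hasProd_of_hasSum_log (one_sub_pow_mul_pos hq0 hq1 hx0 hx1) hlog.hasSum).tprod_eq]
  exact exp_pos _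

lemma qPochR_le_one {x : ℝ} (hx0 : 0 ≤ x) (hx1 : x < 1) : qPochR q x ≤ 1 :=
  le_of_tendsto' (multipliable_qPochR hq0 hq1 x).hasProd.tendsto_prod_nat fun _ =>
    Finset.prod_le_one (fun k _ => (one_sub_pow_mul_pos hq0 hq1 hx0 hx1 k).le)
      fun k _ => sub_le_self _ (by positivity)

lemma qPochR_eq_one_sub_mul (x : ℝ) : qPochR q x = (1 - x) * qPochR q (q * x) := by
  have hshift : (fun k : ℕ => 1 - q ^ (k + 1) * x) = fun k => 1 - q ^ k * (q * x) := by
    ext k; ring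
  rw [qPochR, tprod_eq_zero_mul' (by rw [hshift]; exact multipliable_qPochR hq0 hq1 (q * x)),
    hshift, pow_zero, one_mul, qPochR]

end QPochhammer

/-- Since `(q^{k+1}; q)_∞ = (q; q)_∞ / (q; q)_k`, this is `(q; q)_∞` times Euler's
`q`-exponential `e_q(t) = ∑ tᵏ / (q; q)_k`. -/
noncomputable def eulerSeries (q t : ℝ) : ℝ :=
  ∑' k : ℕ, t ^ k * qPochR q (q ^ (k + 1))

section EulerSeries

variable {q : ℝ} (hq0 : 0 ≤ q) (hq1 : q < 1)
include hq0 hq1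

lemma norm_eulerSeries_term_le (t : ℝ) (k : ℕ) :
    ‖t ^ k * qPochR q (q ^ (k + 1))‖ ≤ |t| ^ k := by
  have hk0 : 0 ≤ q ^ (k + 1) := by positivity
  have hk1 : q ^ (k + 1) < 1 := pow_lt_one₀ hq0 hq1 k.succ_ne_zero
  rw [norm_mul, norm_pow, Real.norm_eq_abs,
    Real.norm_of_nonneg (qPochR_pos hq0 hq1 hk0 hk1).le]
  exact mul_le_of_le_one_right (by positivity) (qPochR_le_one hq0 hq1 hk0 hk1)

lemma summable_eulerSeries {t : ℝ} (ht : |t| < 1) :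
    Summable fun k : ℕ => t ^ k * qPochR q (q ^ (k + 1)) :=
  (summable_geometric_of_lt_one (abs_nonneg t) ht).of_norm_bounded
    (norm_eulerSeries_term_le hq0 hq1 t)

lemma eulerSeries_mul_left {t : ℝ} (ht : |t| < 1) :
    eulerSeries q (q * t) = (1 - t) * eulerSeries q t := by
  have hqt : |q * t| < 1 := by
    rw [abs_mul, abs_of_nonneg hq0]
    nlinarith [abs_nonneg t]
  -- The terms of `G(t) - G(qt)` are `tᵏ (1 - qᵏ) (q^{k+1}; q)_∞ = tᵏ (qᵏ; q)_∞`, and the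
  -- one at `k = 0` vanishes.
  have hdiff :
      (fun k : ℕ => t ^ k * qPochR q (q ^ (k + 1)) - (q * t) ^ k * qPochR q (q ^ (k + 1)))
        = fun k => t ^ k * (1 - q ^ k) * qPochR q (q ^ (k + 1)) := by
    ext k; ring
  have hshift (k : ℕ) : t ^ (k + 1) * (1 - q ^ (k + 1)) * qPochR q (q ^ (k + 1 + 1))
      = t * (t ^ k * qPochR q (q ^ (k + 1))) := by
    rw [qPochR_eq_one_sub_mul hq0 hq1 (q ^ (k + 1)), ← pow_succ']
    ring
  have hsum : eulerSeries q t - eulerSeries q (q * t) = t * eulerSeries q t := by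
    rw [eulerSeries, eulerSeries, ← (summable_eulerSeries hq0 hq1 ht).tsum_sub
      (summable_eulerSeries hq0 hq1 hqt), hdiff,
      tsum_eq_zero_add' ((summable_eulerSeries hq0 hq1 ht).mul_left t |>.congr fun k =>
        (hshift k).symm)]
    simp only [hshift, tsum_mul_left]
    ring
  linear_combination -hsum

lemma eulerSeries_pow_mul {t : ℝ} (ht : |t| < 1) (N : ℕ) :
    eulerSeries q (q ^ N * t) = (∏ j ∈ Finset.range N, (1 - q ^ j * t)) * eulerSeries q t := by
  induction N with
  | zero => simp
  | succ N ih =>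
    have hNt : |q ^ N * t| < 1 := by
      rw [abs_mul, abs_of_nonneg (by positivity)]
      exact lt_of_le_of_lt (mul_le_of_le_one_left (abs_nonneg t) (pow_le_one₀ hq0 hq1.le)) ht
    rw [pow_succ', mul_assoc, eulerSeries_mul_left hq0 hq1 hNt, ih, Finset.prod_range_succ]
    ring

lemma tendsto_eulerSeries_pow_mul {t : ℝ} (ht : |t| < 1) :
    Tendsto (fun N : ℕ => eulerSeries q (q ^ N * t)) atTop (𝓝 (qPochR q q)) := by
  have hlim : ∑' k : ℕ, (0 * t) ^ k * qPochR q (q ^ (k + 1)) = qPochR q q := by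
    rw [tsum_eq_single 0 fun k hk => by simp [zero_pow hk]]
    simp
  rw [← hlim]
  refine tendsto_tsum_of_dominated_convergence (summable_geometric_of_lt_one (abs_nonneg t) ht)
    (fun k => ?_) (Eventually.of_forall fun N k => ?_)
  · exact (((tendsto_pow_atTop_nhds_zero_of_lt_one hq0 hq1).mul_const t).pow k).mul_const _
  · refine (norm_eulerSeries_term_le hq0 hq1 _ k).trans (pow_le_pow_left₀ (abs_nonneg _) ?_ k)
    rw [abs_mul, abs_of_nonneg (by positivity)]
    exact mul_le_of_le_one_left (abs_nonneg t) (pow_le_one₀ hq0 hq1.le)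

lemma eulerSeries_mul_qPochR {t : ℝ} (ht : |t| < 1) :
    eulerSeries q t * qPochR q t = qPochR q q := by
  have hprod := ((multipliable_qPochR hq0 hq1 t).hasProd.tendsto_prod_nat).mul_const
    (eulerSeries q t)
  refine (mul_comm _ _).trans (tendsto_nhds_unique ?_ (tendsto_eulerSeries_pow_mul hq0 hq1 ht))
  simp only [← eulerSeries_pow_mul hq0 hq1 ht] at hprod
  exact hprod

lemma eulerSeries_eq_div {t : ℝ} (ht0 : 0 ≤ t) (ht1 : t < 1) :
    eulerSeries q t = qPochR q q / qPochR q t := by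
  rw [eq_div_iff (qPochR_pos hq0 hq1 ht0 ht1).ne']
  exact eulerSeries_mul_qPochR hq0 hq1 (by rwa [abs_of_nonneg ht0])

end EulerSeries

lemma jackson0_rpow_mul_comp_div {q a : ℝ} (hq0 : 0 < q) (ha : 0 < a) (r : ℝ) (f : ℝ → ℝ) :
    jackson0 q a (fun ω => ω ^ r * f (ω / a))
      = (1 - q) * a ^ (r + 1) * ∑' k : ℕ, q ^ ((k : ℝ) * (r + 1)) * f (q ^ k) := by
  have hterm (k : ℕ) : q ^ k * ((q ^ k * a) ^ r * f (q ^ k * a / a))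
      = a ^ r * (q ^ ((k : ℝ) * (r + 1)) * f (q ^ k)) := by
    rw [mul_div_cancel_right₀ _ ha.ne', mul_rpow (by positivity) ha.le,
      ← rpow_natCast_mul hq0.le, mul_add_one, rpow_add hq0, rpow_natCast]
    ring
  rw [jackson0, tsum_congr hterm, tsum_mul_left, rpow_add_one ha.ne']
  ring

/-- Let `0 < q < 1`, `a > 0` and `r > −1`.  Then
`∫_0^a ω^r·(qω/a;q)_∞ d_qω = (1−q)·a^{r+1}·(q;q)_∞/(q^{r+1};q)_∞`; explicitly,
`(1−q)·a^{r+1}·∑_{k=0}^∞ q^{k(r+1)}(q^{k+1};q)_∞ = (1−q)·a^{r+1}·(q;q)_∞/(q^{r+1};q)_∞`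
(real powers). -/
theorem stmt_14 (q a r : ℝ) (hq0 : 0 < q) (hq1 : q < 1) (ha : 0 < a) (hr : -1 < r) :
    jackson0 q a (fun ω => ω ^ r * qPochR q (q * ω / a))
      = (1 - q) * a ^ (r + 1) * qPochR q q / qPochR q (q ^ (r + 1)) ∧
    (1 - q) * a ^ (r + 1) * ∑' k : ℕ, q ^ ((k : ℝ) * (r + 1)) * qPochR q (q ^ (k + 1))
      = (1 - q) * a ^ (r + 1) * qPochR q q / qPochR q (q ^ (r + 1)) := by
  have hsum : ∑' k : ℕ, q ^ ((k : ℝ) * (r + 1)) * qPochR q (q ^ (k + 1))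
      = qPochR q q / qPochR q (q ^ (r + 1)) := by
    simp_rw [mul_comm _ (r + 1), rpow_mul_natCast hq0.le]
    exact eulerSeries_eq_div hq0.le hq1 (rpow_nonneg hq0.le _)
      (rpow_lt_one hq0.le hq1 (by linarith))
  have hjackson := jackson0_rpow_mul_comp_div hq0 ha r fun u => qPochR q (q * u)
  simp only [mul_div_assoc, ← pow_succ'] at hjackson ⊢
  rw [hjackson, hsum]
  exact ⟨rfl, rfl⟩
end
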